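/- Let q, s ∈ [1,∞] with q < s, and A = (α₀, α_∞), B = (β₀, β_∞) ∈ ℝ² be such that (∞,q,A) and (∞,s,B) are admissible Lorentz–Zygmund parameters and α_∞ + 1/q = β_∞ + 1/s = 0. Then lim_{a→∞} sup{ ‖f^* χ_{(a,∞)}‖_{L^{∞,s,B}(0,∞)} : f measurable on (0,∞), ‖f‖_{L^{∞,q,A}(0,∞)} ≤ 1 } = 0. -/

import Mathlib

open MeasureTheory Set Filter Topology
open scoped ENNReal NNReal

noncomputable section

/-- The nonincreasing rearrangement of an `ℝ≥0∞`-valued function with respect to `μ`: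
`f^*(t) = inf {λ : μ({f > λ}) ≤ t}`. -/
def rearr {α : Type*} [MeasurableSpace α] (μ : Measure α) (f : α → ℝ≥0∞) (t : ℝ) : ℝ≥0∞ :=
  sInf {l : ℝ≥0∞ | μ {x | l < f x} ≤ ENNReal.ofReal t}

/-- Lebesgue measure on `(0,∞)`. -/
def μI : Measure ℝ := volume.restrict (Set.Ioi (0 : ℝ))

/-- `ℓ(t) = 1 + |log t|`. -/
def ell (t : ℝ) : ℝ := 1 + |Real.log t|

/-- The broken-logarithm power `ℓ^A(t)`, equal to `ℓ(t)^{α₀}` for `t ≤ 1` and to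
`ℓ(t)^{α_∞}` for `t > 1`, where `A = (α₀, α_∞)`. -/
def ellA (A : ℝ × ℝ) (t : ℝ) : ℝ := if t ≤ 1 then ell t ^ A.1 else ell t ^ A.2

/-- The `L^q(0,∞)` norm (with `q ∈ [1,∞]`) of a nonnegative function. -/
def lqNorm (q : ℝ≥0∞) (g : ℝ → ℝ≥0∞) : ℝ≥0∞ :=
  if q = ∞ then essSup g μI
  else (∫⁻ t in Set.Ioi (0 : ℝ), g t ^ q.toReal) ^ q.toReal⁻¹

/-- The Lorentz–Zygmund functional
`‖f‖_{L^{p,q,A}(0,∞)} = ‖ t^{1/p - 1/q} ℓ^A(t) f^*(t) ‖_{L^q(0,∞)}`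
(with the conventions `1/∞ = 0`). -/
def lzNorm (p q : ℝ≥0∞) (A : ℝ × ℝ) (f : ℝ → ℝ≥0∞) : ℝ≥0∞ :=
  lqNorm q fun t => ENNReal.ofReal (t ^ (p.toReal⁻¹ - q.toReal⁻¹) * ellA A t) * rearr μI f t

/-- Admissibility of Lorentz–Zygmund parameters: the functional `‖·‖_{L^{p,q,A}}` is
equivalent to a rearrangement-invariant norm. -/
def LZAdmissible (p q : ℝ≥0∞) (A : ℝ × ℝ) : Prop :=
  (p = 1 ∧ q = 1 ∧ 0 ≤ A.1 ∧ A.2 ≤ 0) ∨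
  (1 < p ∧ p < ∞ ∧ 1 ≤ q) ∨
  (p = ∞ ∧ 1 ≤ q ∧ q < ∞ ∧ A.1 + q.toReal⁻¹ < 0) ∨
  (p = ∞ ∧ q = ∞ ∧ A.1 ≤ 0)

open Real

/-!
If `‖f‖_{L^{∞,q,A}} ≤ 1`, the normalisation `α_∞ q = -1` makes the weight on `(1,∞)` equal to
`dt / (t (1 + log t))`, whose integral over `(1,a)` is `log (1 + log a)`; as `f^*` is nonincreasing,
`f^*(a)^q log (1 + log a) ≤ 1`. The tail `g = f^* χ_{(a,∞)}` satisfies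
`g^*(t) ≤ f^*(a + t) ≤ min (f^*(a), f^*(t))`. For `s = ∞` this gives `‖g‖ ≤ f^*(a)`. For `s < ∞`,
the weight `t⁻¹ (1 - log t)^{β₀ s}` is integrable on `(0,1)` by admissibility, and on `(1,∞)` the
weights of `L^{∞,s,B}` and `L^{∞,q,A}` coincide because `β_∞ s = α_∞ q = -1`; hence
`g^{*s} ≤ f^*(a)^{s-q} f^{*q}` there. Altogether `‖g‖^s ≤ M f^*(a)^s + f^*(a)^{s-q}` with
`M = ∫_0^1 t⁻¹ (1 - log t)^{β₀ s} dt`.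
-/

lemma LZAdmissible.one_le {p q : ℝ≥0∞} {A : ℝ × ℝ} (h : LZAdmissible p q A) : 1 ≤ q := by
  rcases h with ⟨-, rfl, -⟩ | ⟨-, -, h⟩ | ⟨-, h, -⟩ | ⟨-, rfl, -⟩ <;> simp [*]

lemma lzAdmissible_top_iff {q : ℝ≥0∞} {A : ℝ × ℝ} :
    LZAdmissible ∞ q A ↔ (1 ≤ q ∧ q < ∞ ∧ A.1 + q.toReal⁻¹ < 0) ∨ (q = ∞ ∧ A.1 ≤ 0) := by
  simp [LZAdmissible]

lemma rearr_antitone {α : Type*} [MeasurableSpace α] (μ : Measure α) (f : α → ℝ≥0∞) :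
    Antitone (rearr μ f) :=
  fun _ _ h => sInf_le_sInf fun _ hl => hl.trans (ENNReal.ofReal_le_ofReal h)

lemma rearr_indicator_Ioi_le {φ : ℝ → ℝ≥0∞} (hφ : Antitone φ) (a t : ℝ) :
    rearr μI ((Ioi a).indicator φ) t ≤ φ (a + t) := by
  refine sInf_le ?_
  have hsub : {x | φ (a + t) < (Ioi a).indicator φ x} ⊆ Ioo a (a + t) := by
    intro x hx
    by_cases hxa : x ∈ Ioi a
    · rw [mem_ofPred_eq, indicator_of_mem hxa] at hx
      exact ⟨hxa, lt_of_not_ge fun h => (hφ h).not_gt hx⟩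
    · simp [indicator_of_notMem hxa] at hx
  calc μI {x | φ (a + t) < (Ioi a).indicator φ x} ≤ volume (Ioo a (a + t)) :=
        (measure_mono hsub).trans (Measure.restrict_le_self _)
    _ = ENNReal.ofReal t := by rw [Real.volume_Ioo, add_sub_cancel_left]

lemma one_le_ell (t : ℝ) : 1 ≤ ell t := le_add_of_nonneg_right (abs_nonneg _)

lemma ellA_pos (A : ℝ × ℝ) (t : ℝ) : 0 < ellA A t := by
  unfold ellA; split_ifs <;> exact rpow_pos_of_pos (zero_lt_one.trans_le (one_le_ell t)) _

lemma ellA_le_one {A : ℝ × ℝ} (hA₀ : A.1 ≤ 0) (hA_inf : A.2 ≤ 0) (t : ℝ) : ellA A t ≤ 1 := by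
  unfold ellA; split_ifs <;> exact rpow_le_one_of_one_le_of_nonpos (one_le_ell t) ‹_›

lemma measurable_ellA (A : ℝ × ℝ) : Measurable (ellA A) := by
  unfold ellA ell; exact Measurable.ite measurableSet_Iic (by fun_prop) (by fun_prop)

lemma ellA_rpow_of_le_one (A : ℝ × ℝ) (r : ℝ) {t : ℝ} (ht₀ : 0 < t) (ht : t ≤ 1) :
    ellA A t ^ r = (1 - log t) ^ (A.1 * r) := by
  rw [ellA, if_pos ht, ell, abs_of_nonpos (log_nonpos ht₀.le ht), ← sub_eq_add_neg,
    ← rpow_mul (by linarith [log_nonpos ht₀.le ht])]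

lemma ellA_rpow_of_one_lt {A : ℝ × ℝ} {r : ℝ} (hr : 0 < r) (hA : A.2 + r⁻¹ = 0) {t : ℝ}
    (ht : 1 < t) : ellA A t ^ r = (1 + log t)⁻¹ := by
  have hAr : A.2 * r = -1 := by
    rw [eq_neg_of_add_eq_zero_left hA, neg_mul, inv_mul_cancel₀ hr.ne']
  rw [ellA, if_neg ht.not_ge, ell, abs_of_nonneg (log_nonneg ht.le),
    ← rpow_mul (by linarith [log_nonneg ht.le]), hAr, rpow_neg_one]

lemma lzNorm_top_rpow_toReal {q : ℝ≥0∞} (hq₀ : q ≠ 0) (hq : q ≠ ∞) (A : ℝ × ℝ)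
    (f : ℝ → ℝ≥0∞) :
    lzNorm ∞ q A f ^ q.toReal =
      ∫⁻ t in Ioi 0, ENNReal.ofReal (t⁻¹ * ellA A t ^ q.toReal) * rearr μI f t ^ q.toReal := by
  have hr : 0 < q.toReal := ENNReal.toReal_pos hq₀ hq
  rw [lzNorm, lqNorm, if_neg hq, ← ENNReal.rpow_mul, inv_mul_cancel₀ hr.ne', ENNReal.rpow_one]
  refine setLIntegral_congr_fun measurableSet_Ioi fun t (ht : 0 < t) => ?_
  simp only [ENNReal.toReal_top, inv_zero, zero_sub]
  rw [ENNReal.mul_rpow_of_nonneg _ _ hr.le,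
    ENNReal.ofReal_rpow_of_nonneg (mul_pos (rpow_pos_of_pos ht _) (ellA_pos A t)).le hr.le,
    mul_rpow (rpow_pos_of_pos ht _).le (ellA_pos A t).le, ← rpow_mul ht.le, neg_mul,
    inv_mul_cancel₀ hr.ne', rpow_neg_one]

lemma setLIntegral_rearr_rpow_le_one {q : ℝ≥0∞} (hq₀ : q ≠ 0) (hq : q ≠ ∞) {A : ℝ × ℝ}
    {f : ℝ → ℝ≥0∞} (hf : lzNorm ∞ q A f ≤ 1) {S : Set ℝ} (hS : S ⊆ Ioi 0) :
    ∫⁻ t in S, ENNReal.ofReal (t⁻¹ * ellA A t ^ q.toReal) * rearr μI f t ^ q.toReal ≤ 1 :=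
  calc _ ≤ lzNorm ∞ q A f ^ q.toReal :=
        (lintegral_mono_set hS).trans_eq (lzNorm_top_rpow_toReal hq₀ hq A f).symm
    _ ≤ 1 := ENNReal.rpow_le_one hf ENNReal.toReal_nonneg

lemma lintegral_Ioc_one_inv_mul_inv_one_add_log {τ : ℝ} (hτ : 1 ≤ τ) :
    ∫⁻ t in Ioc 1 τ, ENNReal.ofReal (t⁻¹ * (1 + log t)⁻¹) = ENNReal.ofReal (log (1 + log τ)) := by
  have hpos : ∀ t ∈ uIcc 1 τ, 0 < t ∧ 0 < 1 + log t := fun t ht => by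
    rw [uIcc_of_le hτ] at ht
    exact ⟨by linarith [ht.1], by linarith [log_nonneg ht.1]⟩
  have hderiv : ∀ t ∈ uIcc 1 τ,
      HasDerivAt (fun u => log (1 + log u)) (t⁻¹ * (1 + log t)⁻¹) t := fun t ht => by
    simpa [div_eq_mul_inv] using
      ((hasDerivAt_log (hpos t ht).1.ne').const_add 1).log (hpos t ht).2.ne'
  have hint : IntervalIntegrable (fun t => t⁻¹ * (1 + log t)⁻¹) volume 1 τ :=
    ContinuousOn.intervalIntegrable fun t ht => ContinuousAt.continuousWithinAt <|
      (continuousAt_inv₀ (hpos t ht).1.ne').mul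
        ((continuousAt_const.add (continuousAt_log (hpos t ht).1.ne')).inv₀ (hpos t ht).2.ne')
  rw [← ofReal_integral_eq_lintegral_ofReal hint.1, ← intervalIntegral.integral_of_le hτ,
    intervalIntegral.integral_eq_sub_of_hasDerivAt hderiv hint, log_one, add_zero, log_one,
    sub_zero]
  refine (ae_restrict_iff' measurableSet_Ioc).2 (ae_of_all _ fun t ht => ?_)
  obtain ⟨ht₀, hlog⟩ := hpos t (by rw [uIcc_of_le hτ]; exact Ioc_subset_Icc_self ht)
  exact mul_nonneg (inv_nonneg.2 ht₀.le) (inv_nonneg.2 hlog.le)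

lemma lintegral_Ioc_zero_one_inv_mul_one_sub_log_rpow_lt_top {c : ℝ} (hc : c < -1) :
    ∫⁻ t in Ioc 0 1, ENNReal.ofReal (t⁻¹ * (1 - log t) ^ c) < ∞ := by
  have himage : (fun x => exp (1 - x)) '' Ici 1 = Ioc 0 1 := by
    ext t
    constructor
    · rintro ⟨x, hx, rfl⟩
      exact ⟨exp_pos _, exp_le_one_iff.2 (by linarith [mem_Ici.1 hx])⟩
    · rintro ⟨ht₀, ht₁⟩
      exact ⟨1 - log t, by simp [log_nonpos ht₀.le ht₁], by simp [exp_log ht₀]⟩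
  have hderiv : ∀ x ∈ Ici (1 : ℝ),
      HasDerivWithinAt (fun x => exp (1 - x)) (-exp (1 - x)) (Ici 1) x := fun x _ => by
    simpa using ((hasDerivAt_id x).const_sub 1).exp.hasDerivWithinAt
  have hinj : InjOn (fun x => exp (1 - x)) (Ici 1) := fun x _ y _ h => by
    simpa using exp_injective h
  rw [← himage, lintegral_image_eq_lintegral_abs_deriv_mul measurableSet_Ici hderiv hinj]
  have hsubst : EqOn (fun x => ENNReal.ofReal |-exp (1 - x)| *
      ENNReal.ofReal ((exp (1 - x))⁻¹ * (1 - log (exp (1 - x))) ^ c))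
      (fun x => ENNReal.ofReal (x ^ c)) (Ici 1) := fun x _ => by
    dsimp only
    rw [← ENNReal.ofReal_mul (abs_nonneg _), abs_neg, abs_of_pos (exp_pos _), log_exp,
      ← mul_assoc, mul_inv_cancel₀ (exp_pos _).ne', one_mul, sub_sub_cancel]
  rw [setLIntegral_congr_fun measurableSet_Ici hsubst]
  exact ((integrableOn_Ici_iff_integrableOn_Ioi).2
    (integrableOn_Ioi_rpow_of_lt hc one_pos)).lintegral_lt_top

lemma rearr_le_inv_log_one_add_log_rpow {q : ℝ≥0∞} (hq₀ : q ≠ 0) (hq : q ≠ ∞) {A : ℝ × ℝ}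
    (hA : A.2 + q.toReal⁻¹ = 0) {f : ℝ → ℝ≥0∞} (hf : lzNorm ∞ q A f ≤ 1) {τ : ℝ} (hτ : 1 ≤ τ) :
    rearr μI f τ ≤ (ENNReal.ofReal (log (1 + log τ)))⁻¹ ^ q.toReal⁻¹ := by
  set r := q.toReal
  have hr : 0 < r := ENNReal.toReal_pos hq₀ hq
  rw [ENNReal.le_rpow_inv_iff hr, ENNReal.le_inv_iff_mul_le]
  calc rearr μI f τ ^ r * ENNReal.ofReal (log (1 + log τ))
      = ∫⁻ t in Ioc 1 τ, ENNReal.ofReal (t⁻¹ * (1 + log t)⁻¹) * rearr μI f τ ^ r := by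
        rw [lintegral_mul_const _ (by fun_prop), lintegral_Ioc_one_inv_mul_inv_one_add_log hτ,
          mul_comm]
    _ ≤ ∫⁻ t in Ioc 1 τ, ENNReal.ofReal (t⁻¹ * ellA A t ^ r) * rearr μI f t ^ r :=
        setLIntegral_mono' measurableSet_Ioc fun t ht => by
          rw [ellA_rpow_of_one_lt hr hA ht.1]
          gcongr
          exact rearr_antitone μI f ht.2
    _ ≤ 1 := setLIntegral_rearr_rpow_le_one hq₀ hq hf fun t ht => zero_lt_one.trans ht.1

lemma lzNorm_top_top_indicator_Ioi_rearr_le {B : ℝ × ℝ} (hB₀ : B.1 ≤ 0) (hB_inf : B.2 ≤ 0)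
    (f : ℝ → ℝ≥0∞) (a : ℝ) :
    lzNorm ∞ ∞ B ((Ioi a).indicator (rearr μI f)) ≤ rearr μI f a := by
  rw [lzNorm, lqNorm, if_pos rfl]
  refine essSup_le_of_ae_le _ ((ae_restrict_iff' measurableSet_Ioi).2 (ae_of_all _ fun t ht => ?_))
  simp only [ENNReal.toReal_top, inv_zero, sub_zero, rpow_zero, one_mul]
  calc ENNReal.ofReal (ellA B t) * rearr μI ((Ioi a).indicator (rearr μI f)) t
      ≤ 1 * rearr μI f (a + t) := by
        gcongr
        · exact ENNReal.ofReal_le_one.2 (ellA_le_one hB₀ hB_inf t)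
        · exact rearr_indicator_Ioi_le (rearr_antitone μI f) a t
    _ ≤ rearr μI f a := by
        rw [one_mul]
        exact rearr_antitone μI f (le_add_of_nonneg_right (mem_Ioi.1 ht).le)

lemma lzNorm_indicator_Ioi_rearr_rpow_le {q s : ℝ≥0∞} (hq₀ : q ≠ 0) (hs : s ≠ ∞) (hqs : q ≤ s)
    {A B : ℝ × ℝ} (hA : A.2 + q.toReal⁻¹ = 0) (hB : B.2 + s.toReal⁻¹ = 0) {f : ℝ → ℝ≥0∞}
    (hf : lzNorm ∞ q A f ≤ 1) {a : ℝ} (ha : 0 ≤ a) :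
    lzNorm ∞ s B ((Ioi a).indicator (rearr μI f)) ^ s.toReal ≤
      rearr μI f a ^ s.toReal *
          (∫⁻ t in Ioc 0 1, ENNReal.ofReal (t⁻¹ * (1 - log t) ^ (B.1 * s.toReal))) +
        rearr μI f a ^ (s.toReal - q.toReal) := by
  have hq : q ≠ ∞ := ne_top_of_le_ne_top hs hqs
  have hs₀ : s ≠ 0 := (lt_of_lt_of_le (pos_iff_ne_zero.2 hq₀) hqs).ne'
  set r := q.toReal
  set σ := s.toReal
  have hr : 0 < r := ENNReal.toReal_pos hq₀ hq
  have hσ : 0 < σ := ENNReal.toReal_pos hs₀ hs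
  have hrσ : r ≤ σ := ENNReal.toReal_mono hs hqs
  set F := rearr μI f
  set G := rearr μI ((Ioi a).indicator F)
  have hGF : ∀ t, G t ≤ F (a + t) := rearr_indicator_Ioi_le (rearr_antitone μI f) a
  rw [lzNorm_top_rpow_toReal hs₀ hs, ← Ioc_union_Ioi_eq_Ioi zero_le_one,
    lintegral_union measurableSet_Ioi (Ioc_disjoint_Ioi le_rfl)]
  gcongr ?_ + ?_
  · rw [← lintegral_const_mul _ (by fun_prop)]
    refine setLIntegral_mono' measurableSet_Ioc fun t ht => ?_
    rw [ellA_rpow_of_le_one B σ ht.1 ht.2, mul_comm]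
    gcongr
    exact (hGF t).trans (rearr_antitone μI f (le_add_of_nonneg_right ht.1.le))
  · calc ∫⁻ t in Ioi 1, ENNReal.ofReal (t⁻¹ * ellA B t ^ σ) * G t ^ σ
        ≤ ∫⁻ t in Ioi 1, F a ^ (σ - r) * (ENNReal.ofReal (t⁻¹ * ellA A t ^ r) * F t ^ r) :=
          setLIntegral_mono' measurableSet_Ioi fun t (ht : 1 < t) => by
            rw [ellA_rpow_of_one_lt hσ hB ht, ← ellA_rpow_of_one_lt hr hA ht, mul_left_comm,
              ← sub_add_cancel σ r, ENNReal.rpow_add_of_nonneg _ _ (sub_nonneg.2 hrσ) hr.le,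
              sub_add_cancel]
            gcongr <;> exact (hGF t).trans (rearr_antitone μI f (by linarith))
      _ = F a ^ (σ - r) * ∫⁻ t in Ioi 1, ENNReal.ofReal (t⁻¹ * ellA A t ^ r) * F t ^ r := by
          refine lintegral_const_mul _ ?_
          have := measurable_ellA A
          have := (rearr_antitone μI f).measurable
          fun_prop
      _ ≤ F a ^ (σ - r) := by
          grw [setLIntegral_rearr_rpow_le_one hq₀ hq hf (Ioi_subset_Ioi zero_le_one), mul_one]

lemma tendsto_rpow_mul_add_rpow_rpow_inv_nhds_zero {M : ℝ≥0∞} (hM : M ≠ ∞) {σ γ : ℝ}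
    (hσ : 0 < σ) (hγ : 0 < γ) :
    Tendsto (fun x : ℝ≥0∞ => (x ^ σ * M + x ^ γ) ^ σ⁻¹) (𝓝 0) (𝓝 0) := by
  have h := ((ENNReal.Tendsto.mul_const ((tendsto_id (x := 𝓝 (0 : ℝ≥0∞))).ennrpow_const σ)
    (Or.inr hM)).add (tendsto_id.ennrpow_const γ)).ennrpow_const σ⁻¹
  simpa [ENNReal.zero_rpow_of_pos hσ, ENNReal.zero_rpow_of_pos hγ,
    ENNReal.zero_rpow_of_pos (inv_pos.2 hσ)] using h

lemma tendsto_iSup_lzNorm_indicator_Ioi_rearr {q s : ℝ≥0∞} (hq₀ : q ≠ 0) (hq : q ≠ ∞)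
    {A B : ℝ × ℝ} (hA : A.2 + q.toReal⁻¹ = 0) {h : ℝ≥0∞ → ℝ≥0∞} (hh_mono : Monotone h)
    (hh : Tendsto h (𝓝 0) (𝓝 0))
    (hbound : ∀ (f : ℝ → ℝ≥0∞) (a : ℝ), lzNorm ∞ q A f ≤ 1 → 1 ≤ a →
      lzNorm ∞ s B ((Ioi a).indicator (rearr μI f)) ≤ h (rearr μI f a)) :
    Tendsto (fun a : ℝ =>
        ⨆ (f : ℝ → ℝ≥0∞) (_ : Measurable f) (_ : lzNorm ∞ q A f ≤ 1),
          lzNorm ∞ s B ((Set.Ioi a).indicator fun t => rearr μI f t))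
      atTop (𝓝 0) := by
  have hr : 0 < q.toReal := ENNReal.toReal_pos hq₀ hq
  have hδ : Tendsto (fun a : ℝ => (ENNReal.ofReal (log (1 + log a)))⁻¹ ^ q.toReal⁻¹)
      atTop (𝓝 0) := by
    have hlog : Tendsto (fun a : ℝ => log (1 + log a)) atTop atTop :=
      tendsto_log_atTop.comp (tendsto_atTop_add_const_left _ 1 tendsto_log_atTop)
    simpa [ENNReal.zero_rpow_of_pos (inv_pos.2 hr)] using
      (tendsto_inv_iff.2 (ENNReal.tendsto_ofReal_atTop.comp hlog)).ennrpow_const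
        q.toReal⁻¹
  refine tendsto_of_tendsto_of_tendsto_of_le_of_le' tendsto_const_nhds (hh.comp hδ)
    (Eventually.of_forall fun _ => zero_le) ?_
  filter_upwards [eventually_ge_atTop 1] with a ha
  refine iSup_le fun f => iSup_le fun _ => iSup_le fun hf => ?_
  exact (hbound f a hf ha).trans (hh_mono (rearr_le_inv_log_one_add_log_rpow hq₀ hq hA hf ha))

/-- for `p = r = ∞`, `q < s` and `α_∞ + 1/q = β_∞ + 1/s = 0`, the tails
are uniformly small. -/
theorem lz_tail_vanishes_limiting (q s : ℝ≥0∞) (A B : ℝ × ℝ)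
    (hA : LZAdmissible ∞ q A) (hB : LZAdmissible ∞ s B) (hqs : q < s)
    (hAq : A.2 + q.toReal⁻¹ = 0) (hBs : B.2 + s.toReal⁻¹ = 0) :
    Tendsto (fun a : ℝ =>
        ⨆ (f : ℝ → ℝ≥0∞) (_ : Measurable f) (_ : lzNorm ∞ q A f ≤ 1),
          lzNorm ∞ s B ((Set.Ioi a).indicator fun t => rearr μI f t))
      atTop (nhds 0) := by
  have hq₀ : q ≠ 0 := (zero_lt_one.trans_le hA.one_le).ne'
  have hq : q ≠ ∞ := hqs.ne_top
  rcases lzAdmissible_top_iff.1 hB with ⟨hs₁, hs, hB₀⟩ | ⟨rfl, hB₀⟩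
  · have hσ : 0 < s.toReal := ENNReal.toReal_pos (zero_lt_one.trans_le hs₁).ne' hs.ne
    have hM : ∫⁻ t in Ioc 0 1, ENNReal.ofReal (t⁻¹ * (1 - log t) ^ (B.1 * s.toReal)) ≠ ∞ :=
      (lintegral_Ioc_zero_one_inv_mul_one_sub_log_rpow_lt_top
        (by nlinarith [mul_inv_cancel₀ hσ.ne'])).ne
    have hγ : 0 < s.toReal - q.toReal := sub_pos.2 ((ENNReal.toReal_lt_toReal hq hs.ne).2 hqs)
    refine tendsto_iSup_lzNorm_indicator_Ioi_rearr hq₀ hq hAq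
      (fun x y hxy => by gcongr)
      (tendsto_rpow_mul_add_rpow_rpow_inv_nhds_zero hM hσ hγ) fun f a hf ha => ?_
    exact (ENNReal.le_rpow_inv_iff hσ).2 <|
      lzNorm_indicator_Ioi_rearr_rpow_le hq₀ hs.ne hqs.le hAq hBs hf (zero_le_one.trans ha)
  · exact tendsto_iSup_lzNorm_indicator_Ioi_rearr hq₀ hq hAq monotone_id tendsto_id
      fun f a _ _ => lzNorm_top_top_indicator_Ioi_rearr_le hB₀ (by simpa using hBs.le) f a

end
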